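/- Let 𝕋 = AddCircle (2π) with its Haar (Lebesgue) measure and let E = L^∞(𝕋; ℝ). Call v ∈ E even if v agrees almost everywhere with its composition with the negation map x ↦ −x of 𝕋. Let T : E → E be a continuous linear operator that maps even elements to even elements, with D₀ := ‖T‖ < 1. Let F, N ∈ E be even with δ₀ := ‖F‖_{L^∞}, n₀ := ‖N‖_{L^∞}, and assume n₀ > 0 and δ₀ < (1 − D₀)²/(4n₀). Set ε = (1 − D₀ − √((1 − D₀)² − 4δ₀n₀))/(2n₀) and X_ε = {v ∈ E : v is even and ‖v‖_{L^∞} ≤ ε}, and define G[v] = (I − T)^{−1}(−F − N·v²), where products are taken pointwise almost everywhere and the inverse exists since ‖T‖ < 1. Then (1) G maps X_ε into X_ε, and (2) there exists k₀ < 1 such that ‖G[v] − G[w]‖_{L^∞} ≤ k₀·‖v − w‖_{L^∞} for all v, w ∈ X_ε. -/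

import Mathlib

open MeasureTheory ENNReal

instance : Fact ((0:ℝ) < 2 * Real.pi) := ⟨by positivity⟩

/-- `E = L^∞(𝕋; ℝ)` where `𝕋 = AddCircle (2π)` carries its Haar (Lebesgue) measure. -/
noncomputable abbrev LinfT := Lp ℝ ∞ (volume : Measure (AddCircle (2 * Real.pi)))

/-- `v ∈ E` is even if it agrees a.e. with its composition with negation. -/
def IsEvenLp (v : LinfT) : Prop := ∀ᵐ x : AddCircle (2 * Real.pi), v (-x) = v x

/-- The pointwise a.e. product of two elements of `L^∞`. -/
noncomputable def linfMul (f g : LinfT) : LinfT :=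
  MemLp.toLp (⇑f • ⇑g) (MemLp.smul (r := ∞) (Lp.memLp g) (Lp.memLp f))

/-- The fixed-point radius `ε = (1 − D₀ − √((1 − D₀)² − 4δ₀n₀))/(2n₀)`. -/
noncomputable def epsFix (D₀ δ₀ n₀ : ℝ) : ℝ :=
  (1 - D₀ - Real.sqrt ((1 - D₀) ^ 2 - 4 * δ₀ * n₀)) / (2 * n₀)

/-- The operator `G[v] = (I − T)^{−1}(−F − N·v²)`, where the inverse exists since `‖T‖ < 1`. -/
noncomputable def Gop (T : LinfT →L[ℝ] LinfT) (hT : ‖T‖ < 1) (F N : LinfT)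
    (v : LinfT) : LinfT :=
  (↑(Units.oneSub T hT)⁻¹ : LinfT →L[ℝ] LinfT) (-F - linfMul N (linfMul v v))


lemma hneg : MeasurePreserving (Neg.neg) (volume : Measure (AddCircle (2*Real.pi))) volume :=
  Measure.measurePreserving_neg _

noncomputable def Rneg : LinfT →L[ℝ] LinfT :=
  (Lp.compMeasurePreservingₗᵢ ℝ Neg.neg hneg).toContinuousLinearMap

lemma Rneg_coeFn (v : LinfT) : Rneg v =ᵐ[volume] v ∘ Neg.neg :=
  Lp.coeFn_compMeasurePreserving v hneg

lemma even_iff (v : LinfT) : IsEvenLp v ↔ Rneg v = v := by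
  constructor
  · intro h
    exact Lp.ext ((Rneg_coeFn v).trans h)
  · intro h
    have := Rneg_coeFn v
    rw [h] at this
    exact this.symm

lemma coeFn_linfMul (f g : LinfT) : linfMul f g =ᵐ[volume] fun x => f x * g x :=
  MemLp.coeFn_toLp _

lemma ae_comp_neg {f g : AddCircle (2*Real.pi) → ℝ} (h : f =ᵐ[volume] g) :
    (f ∘ Neg.neg) =ᵐ[volume] (g ∘ Neg.neg) :=
  hneg.quasiMeasurePreserving.ae_eq_comp h

lemma even_linfMul {f g : LinfT} (hf : IsEvenLp f) (hg : IsEvenLp g) :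
    IsEvenLp (linfMul f g) := by
  have h := coeFn_linfMul f g
  have h2 := ae_comp_neg h
  filter_upwards [h, h2, hf, hg] with x e1 e2 ef eg
  simp only [Function.comp_apply] at e2
  rw [e2, e1, ef, eg]

lemma even_neg' {f : LinfT} (hf : IsEvenLp f) : IsEvenLp (-f) := by
  have h := Lp.coeFn_neg f
  have h2 := ae_comp_neg h
  filter_upwards [h, h2, hf] with x e1 e2 ef
  simp only [Function.comp_apply, Pi.neg_apply] at e1 e2
  rw [e2, e1, ef]

lemma even_sub {f g : LinfT} (hf : IsEvenLp f) (hg : IsEvenLp g) : IsEvenLp (f - g) := by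
  have h := Lp.coeFn_sub f g
  have h2 := ae_comp_neg h
  filter_upwards [h, h2, hf, hg] with x e1 e2 ef eg
  simp only [Function.comp_apply, Pi.sub_apply] at e1 e2
  rw [e2, e1, ef, eg]

lemma norm_linfMul_le (f g : LinfT) : ‖linfMul f g‖ ≤ ‖f‖ * ‖g‖ := by
  rw [Lp.norm_def, Lp.norm_def, Lp.norm_def]
  rw [eLpNorm_congr_ae (coeFn_linfMul f g)]
  have hb : eLpNorm (fun x => f x * g x) ∞ volume ≤
      eLpNorm (⇑f) ∞ volume * eLpNorm (⇑g) ∞ volume :=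
    eLpNorm_smul_le_eLpNorm_top_mul_eLpNorm ∞ (Lp.aestronglyMeasurable g) (⇑f)
  rw [← ENNReal.toReal_mul]
  exact ENNReal.toReal_mono (ENNReal.mul_ne_top (Lp.eLpNorm_ne_top f) (Lp.eLpNorm_ne_top g)) hb

set_option synthInstance.maxHeartbeats 1000000
set_option maxHeartbeats 1000000

lemma norm_pow_le_pow (T : LinfT →L[ℝ] LinfT) : ∀ n : ℕ, ‖T ^ n‖ ≤ ‖T‖ ^ n := by
  intro n
  induction n with
  | zero => simpa [ContinuousLinearMap.one_def] using ContinuousLinearMap.norm_id_le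
  | succ n ih =>
    rw [pow_succ, pow_succ]
    exact (norm_mul_le _ _).trans (mul_le_mul_of_nonneg_right ih (norm_nonneg T))

lemma norm_pow_apply_le (T : LinfT →L[ℝ] LinfT) (x : LinfT) (n : ℕ) :
    ‖(T ^ n) x‖ ≤ ‖T‖ ^ n * ‖x‖ :=
  ((T ^ n).le_opNorm x).trans (mul_le_mul_of_nonneg_right (norm_pow_le_pow T n) (norm_nonneg x))

lemma summable_pow_apply (T : LinfT →L[ℝ] LinfT) (hT : ‖T‖ < 1) (x : LinfT) :
    Summable fun n : ℕ => (T ^ n) x :=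
  Summable.of_norm <| Summable.of_nonneg_of_le (fun _ => norm_nonneg _)
    (norm_pow_apply_le T x)
    ((summable_geometric_of_lt_one (norm_nonneg T) hT).mul_right ‖x‖)

lemma oneSub_inv_apply (T : LinfT →L[ℝ] LinfT) (hT : ‖T‖ < 1) (x : LinfT) :
    (↑(Units.oneSub T hT)⁻¹ : LinfT →L[ℝ] LinfT) x = ∑' n : ℕ, (T ^ n) x := by
  have h1 : (↑(Units.oneSub T hT)⁻¹ : LinfT →L[ℝ] LinfT) = ∑' n : ℕ, T ^ n := rfl
  rw [h1]
  exact (ContinuousLinearMap.apply ℝ LinfT x).map_tsum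
    (summable_geometric_of_norm_lt_one hT)

lemma oneSub_inv_norm_le (T : LinfT →L[ℝ] LinfT) (hT : ‖T‖ < 1) (x : LinfT) :
    ‖(↑(Units.oneSub T hT)⁻¹ : LinfT →L[ℝ] LinfT) x‖ ≤ (1 - ‖T‖)⁻¹ * ‖x‖ := by
  rw [oneSub_inv_apply T hT x]
  have hs : Summable fun n : ℕ => ‖T‖ ^ n * ‖x‖ :=
    (summable_geometric_of_lt_one (norm_nonneg T) hT).mul_right ‖x‖
  have hsn : Summable fun n : ℕ => ‖(T ^ n) x‖ :=
    Summable.of_nonneg_of_le (fun _ => norm_nonneg _) (norm_pow_apply_le T x) hs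
  calc ‖∑' n : ℕ, (T ^ n) x‖ ≤ ∑' n : ℕ, ‖(T ^ n) x‖ := norm_tsum_le_tsum_norm hsn
    _ ≤ ∑' n : ℕ, ‖T‖ ^ n * ‖x‖ := Summable.tsum_le_tsum (norm_pow_apply_le T x) hsn hs
    _ = (1 - ‖T‖)⁻¹ * ‖x‖ := by
        rw [tsum_mul_right, tsum_geometric_of_lt_one (norm_nonneg T) hT]

lemma oneSub_inv_even (T : LinfT →L[ℝ] LinfT) (hT : ‖T‖ < 1)
    (hTeven : ∀ v : LinfT, IsEvenLp v → IsEvenLp (T v))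
    {x : LinfT} (hx : IsEvenLp x) :
    IsEvenLp ((↑(Units.oneSub T hT)⁻¹ : LinfT →L[ℝ] LinfT) x) := by
  have hpow : ∀ n : ℕ, IsEvenLp ((T ^ n) x) := by
    intro n
    induction n with
    | zero => simpa using hx
    | succ n ih =>
      have h : (T ^ (n + 1)) x = T ((T ^ n) x) := by
        rw [pow_succ']; rfl
      rw [h]
      exact hTeven _ ih
  rw [even_iff]
  have h1 := oneSub_inv_apply T hT x
  have h2 : Rneg (∑' n : ℕ, (T ^ n) x) = ∑' n : ℕ, Rneg ((T ^ n) x) :=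
    Rneg.map_tsum (summable_pow_apply T hT x)
  rw [h1, h2]
  exact tsum_congr fun n => (even_iff _).1 (hpow n)

lemma key_sub (F N v w : LinfT) :
    (-F - linfMul N (linfMul v v)) - (-F - linfMul N (linfMul w w)) =
      linfMul N (linfMul (w + v) (w - v)) := by
  apply Lp.ext
  have h1 := coeFn_linfMul v v
  have h2 := coeFn_linfMul w w
  have h3 := coeFn_linfMul N (linfMul v v)
  have h4 := coeFn_linfMul N (linfMul w w)
  have h5 := coeFn_linfMul (w + v) (w - v)
  have h6 := coeFn_linfMul N (linfMul (w + v) (w - v))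
  have ha := Lp.coeFn_add w v
  have hs := Lp.coeFn_sub w v
  have hL1 := Lp.coeFn_sub (-F - linfMul N (linfMul v v)) (-F - linfMul N (linfMul w w))
  have hL2 := Lp.coeFn_sub (-F) (linfMul N (linfMul v v))
  have hL3 := Lp.coeFn_sub (-F) (linfMul N (linfMul w w))
  have hL4 := Lp.coeFn_neg F
  filter_upwards [h1, h2, h3, h4, h5, h6, ha, hs, hL1, hL2, hL3, hL4] with x e1 e2 e3 e4 e5 e6 ea es eL1 eL2 eL3 eL4
  simp only [Pi.add_apply, Pi.sub_apply, Pi.neg_apply] at *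
  rw [eL1, eL2, eL3, eL4, e3, e4, e1, e2, e6, e5, ea, es]
  ring

/-- With `D₀ = ‖T‖ < 1`, `δ₀ = ‖F‖`, `n₀ = ‖N‖ > 0` and `δ₀ < (1 − D₀)²/(4 n₀)`,
the map `G` sends the even ball `X_ε` of radius `ε` into itself and is a contraction on it. -/
theorem stmt_3 (T : LinfT →L[ℝ] LinfT) (hT : ‖T‖ < 1)
    (hTeven : ∀ v : LinfT, IsEvenLp v → IsEvenLp (T v))
    (F N : LinfT) (hF : IsEvenLp F) (hN : IsEvenLp N)
    (hn : 0 < ‖N‖) (hδ : ‖F‖ < (1 - ‖T‖) ^ 2 / (4 * ‖N‖)) :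
    (∀ v : LinfT, IsEvenLp v → ‖v‖ ≤ epsFix ‖T‖ ‖F‖ ‖N‖ →
      IsEvenLp (Gop T hT F N v) ∧ ‖Gop T hT F N v‖ ≤ epsFix ‖T‖ ‖F‖ ‖N‖) ∧
    ∃ k₀ < (1:ℝ), ∀ v w : LinfT,
      IsEvenLp v → ‖v‖ ≤ epsFix ‖T‖ ‖F‖ ‖N‖ →
      IsEvenLp w → ‖w‖ ≤ epsFix ‖T‖ ‖F‖ ‖N‖ →
      ‖Gop T hT F N v - Gop T hT F N w‖ ≤ k₀ * ‖v - w‖ := by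
  set D := ‖T‖ with hD
  set δ := ‖F‖ with hδdef
  set n := ‖N‖ with hndef
  set a : ℝ := 1 - D with hadef
  have ha : 0 < a := by simp only [hadef]; linarith
  have hδ0 : 0 ≤ δ := norm_nonneg F
  have hΔ : 0 < a ^ 2 - 4 * δ * n := by
    have h4n : 0 < 4 * n := by linarith
    have := (lt_div_iff₀ h4n).1 hδ
    nlinarith
  set s : ℝ := Real.sqrt (a ^ 2 - 4 * δ * n) with hsdef
  have hs2 : s ^ 2 = a ^ 2 - 4 * δ * n := Real.sq_sqrt hΔ.le
  have hs_pos : 0 < s := Real.sqrt_pos.2 hΔ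
  have hs_le_a : s ≤ a := by nlinarith
  set ε : ℝ := epsFix D δ n with hεdef
  have hεval : ε = (a - s) / (2 * n) := rfl
  have hε0 : 0 ≤ ε := by
    rw [hεval]; apply div_nonneg (by linarith) (by linarith)
  have key : δ + n * ε ^ 2 = a * ε := by
    rw [hεval]
    field_simp
    nlinarith
  have hbound : ∀ v : LinfT, ‖v‖ ≤ ε →
      ‖(-F - linfMul N (linfMul v v))‖ ≤ δ + n * ε ^ 2 := by
    intro v hv
    have hv0 : (0:ℝ) ≤ ‖v‖ := norm_nonneg v
    calc ‖(-F - linfMul N (linfMul v v))‖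
        ≤ ‖(-F : LinfT)‖ + ‖linfMul N (linfMul v v)‖ := norm_sub_le _ _
      _ ≤ δ + n * ε ^ 2 := by
          rw [norm_neg]
          have h1 : ‖linfMul N (linfMul v v)‖ ≤ n * (‖v‖ * ‖v‖) :=
            (norm_linfMul_le N _).trans
              (mul_le_mul_of_nonneg_left (norm_linfMul_le v v) hn.le)
          have h2 : ‖v‖ * ‖v‖ ≤ ε ^ 2 := by nlinarith
          nlinarith
  constructor
  · intro v hve hvn
    have heven_arg : IsEvenLp (-F - linfMul N (linfMul v v)) :=
      even_sub (even_neg' hF) (even_linfMul hN (even_linfMul hve hve))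
    refine ⟨oneSub_inv_even T hT hTeven heven_arg, ?_⟩
    calc ‖Gop T hT F N v‖
        ≤ (1 - D)⁻¹ * ‖(-F - linfMul N (linfMul v v))‖ :=
          oneSub_inv_norm_le T hT _
      _ ≤ (1 - D)⁻¹ * (δ + n * ε ^ 2) := by
          apply mul_le_mul_of_nonneg_left (hbound v hvn)
          exact inv_nonneg.2 ha.le
      _ = ε := by rw [key, ← hadef, inv_mul_cancel_left₀ (ne_of_gt ha)]
  · refine ⟨(1 - D)⁻¹ * (2 * n * ε), ?_, ?_⟩
    · have h2nε : 2 * n * ε = a - s := by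
        rw [hεval]; field_simp
      rw [h2nε, ← hadef]
      rw [inv_mul_lt_iff₀ ha, mul_one]
      linarith
    · intro v w hve hvn hwe hwn
      have hdiff : Gop T hT F N v - Gop T hT F N w =
          (↑(Units.oneSub T hT)⁻¹ : LinfT →L[ℝ] LinfT)
            (linfMul N (linfMul (w + v) (w - v))) := by
        rw [Gop, Gop, ← map_sub, key_sub]
      rw [hdiff]
      calc ‖(↑(Units.oneSub T hT)⁻¹ : LinfT →L[ℝ] LinfT)
            (linfMul N (linfMul (w + v) (w - v)))‖
          ≤ (1 - D)⁻¹ * ‖linfMul N (linfMul (w + v) (w - v))‖ :=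
            oneSub_inv_norm_le T hT _
        _ ≤ (1 - D)⁻¹ * (2 * n * ε) * ‖v - w‖ := by
            have h1 : ‖linfMul N (linfMul (w + v) (w - v))‖ ≤
                n * ((‖w‖ + ‖v‖) * ‖w - v‖) :=
              (norm_linfMul_le N _).trans
                (mul_le_mul_of_nonneg_left
                  ((norm_linfMul_le _ _).trans
                    (mul_le_mul_of_nonneg_right (norm_add_le w v) (norm_nonneg _)))
                  hn.le)
            rw [norm_sub_rev w v] at h1
            have h2 : (‖w‖ + ‖v‖) * ‖v - w‖ ≤ 2 * ε * ‖v - w‖ := by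
              apply mul_le_mul_of_nonneg_right (by linarith) (norm_nonneg _)
            have hinv : (0:ℝ) ≤ (1 - D)⁻¹ := inv_nonneg.2 ha.le
            have hnn : (0:ℝ) ≤ n := hn.le
            calc (1 - D)⁻¹ * ‖linfMul N (linfMul (w + v) (w - v))‖
                ≤ (1 - D)⁻¹ * (n * (2 * ε * ‖v - w‖)) := by
                  apply mul_le_mul_of_nonneg_left _ hinv
                  exact h1.trans (mul_le_mul_of_nonneg_left h2 hnn)
              _ = (1 - D)⁻¹ * (2 * n * ε) * ‖v - w‖ := by ring
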